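/- Let {0} = L_0 ⊂ L_1 ⊂ ⋯ ⊂ L_m = L be a (q, γ)-filtration of a full-rank lattice L ⊆ ℝⁿ. Then for every 1 ≤ j ≤ m: μ(L_j) ≤ (q/√(1 − 1/γ²)) · λ₁(L_j/L_{j−1})/2. Consequently, if γ ≥ 2, then μ(L_j) ≤ q·λ₁(L_j/L_{j−1}). -/

import Mathlib

/-!
Pythagoras, applied orthogonally to `span L_{j-1}`, gives
`μ(L_j)² ≤ μ(L_{j-1})² + μ(L_j/L_{j-1})²`, hence `μ(L_j)² ≤ ∑_{i ≤ j} (q λ₁(L_i/L_{i-1}) / 2)²`.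
The gap condition makes `λ₁(L_i/L_{i-1}) ≤ γ^(i-j) λ₁(L_j/L_{j-1})`, so this sum is dominated by a
geometric series of ratio `1/γ²`, whence the factor `1/√(1 - 1/γ²)`, which is at most `2` for
`γ ≥ 2`.
-/

open Metric Submodule
noncomputable section

/-- The length of a shortest nonzero vector of a set `A`. -/
def lambda1 {E : Type*} [NormedAddCommGroup E] (A : Set E) : ℝ :=
  sInf (norm '' (A \ {0}))

/-- The covering radius of a lattice (given as a set): the supremum, over points `x` in the
real span of `A`, of the distance from `x` to `A`. -/
def covRad {E : Type*} [NormedAddCommGroup E] [NormedSpace ℝ E] (A : Set E) : ℝ :=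
  sSup ((fun x => Metric.infDist x A) '' ((Submodule.span ℝ A : Submodule ℝ E) : Set E))

/-- The image of the set `A` under the orthogonal projection onto the orthogonal complement
of the real span of `S`. -/
def projPerp {n : ℕ} (S A : Set (EuclideanSpace ℝ (Fin n))) : Set (EuclideanSpace ℝ (Fin n)) :=
  (fun x => ((orthogonalProjection (Submodule.span ℝ S)ᗮ) x : EuclideanSpace ℝ (Fin n))) '' A

/-- The quotient lattice `L_j / L_{j−1}`: the orthogonal projection of `L_j` onto the
orthogonal complement of the span of `L_{j−1}`. -/
def quotLat {n : ℕ} (Ls : ℕ → Submodule ℤ (EuclideanSpace ℝ (Fin n))) (j : ℕ) :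
    Set (EuclideanSpace ℝ (Fin n)) :=
  projPerp (Ls (j - 1) : Set (EuclideanSpace ℝ (Fin n)))
    (Ls j : Set (EuclideanSpace ℝ (Fin n)))

/-- `Ls 0 ⊂ Ls 1 ⊂ ⋯ ⊂ Ls m` is a chain of primitive sublattices of `L` from `{0}` to `L`. -/
def IsPrimitiveChain {n : ℕ} (L : Submodule ℤ (EuclideanSpace ℝ (Fin n))) (m : ℕ)
    (Ls : ℕ → Submodule ℤ (EuclideanSpace ℝ (Fin n))) : Prop :=
  Ls 0 = ⊥ ∧ Ls m = L ∧ (∀ j, j < m → Ls j < Ls (j + 1)) ∧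
    ∀ j, j ≤ m → (Ls j : Set (EuclideanSpace ℝ (Fin n)))
      = (L : Set (EuclideanSpace ℝ (Fin n)))
        ∩ (Submodule.span ℝ (Ls j : Set (EuclideanSpace ℝ (Fin n))) :
            Submodule ℝ (EuclideanSpace ℝ (Fin n)))

/-- A `(q, γ)`-filtration of `L`: a chain of primitive sublattices such that
`μ(L_j/L_{j−1}) ≤ q·λ₁(L_j/L_{j−1})/2` and `λ₁(L_{j+1}/L_j) ≥ γ·λ₁(L_j/L_{j−1})`. -/
def IsQGFiltration {n : ℕ} (L : Submodule ℤ (EuclideanSpace ℝ (Fin n))) (m : ℕ)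
    (Ls : ℕ → Submodule ℤ (EuclideanSpace ℝ (Fin n))) (q γ : ℝ) : Prop :=
  IsPrimitiveChain L m Ls ∧
  (∀ j, 1 ≤ j → j ≤ m → covRad (quotLat Ls j) ≤ q * lambda1 (quotLat Ls j) / 2) ∧
  (∀ j, 1 ≤ j → j < m → lambda1 (quotLat Ls (j + 1)) ≥ γ * lambda1 (quotLat Ls j))

/-- The `j`-th "compressed projection" embedding `E_{j,α}(x) = Σ_{i=j}^m α^{i−j}·π_i(x)`,
where `π_i` is the orthogonal projection onto `span(L_i) ∩ span(L_{i−1})ᗮ`. -/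
def filtEmbed {n : ℕ} (Ls : ℕ → Submodule ℤ (EuclideanSpace ℝ (Fin n))) (m : ℕ) (α : ℝ)
    (j : ℕ) (x : EuclideanSpace ℝ (Fin n)) : EuclideanSpace ℝ (Fin n) :=
  ∑ i ∈ Finset.Icc j m, α ^ (i - j) •
    ((orthogonalProjection
        ((Submodule.span ℝ (Ls i : Set (EuclideanSpace ℝ (Fin n)))) ⊓
          (Submodule.span ℝ (Ls (i - 1) : Set (EuclideanSpace ℝ (Fin n))))ᗮ) x :
      EuclideanSpace ℝ (Fin n)))

lemma lambda1_nonneg {E : Type*} [NormedAddCommGroup E] (A : Set E) : 0 ≤ lambda1 A :=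
  Real.sInf_nonneg <| by
    rintro _ ⟨v, -, rfl⟩
    exact norm_nonneg v

section CovRad

variable {E : Type*} [NormedAddCommGroup E] [NormedSpace ℝ E]

lemma covRad_nonneg (A : Set E) : 0 ≤ covRad A :=
  Real.sSup_nonneg <| by
    rintro _ ⟨x, -, rfl⟩
    exact infDist_nonneg

lemma infDist_le_covRad {A : Set E}
    (hA : BddAbove ((fun x => infDist x A) '' (span ℝ A : Set E))) {x : E} (hx : x ∈ span ℝ A) :
    infDist x A ≤ covRad A :=
  le_csSup hA ⟨x, hx, rfl⟩

lemma covRad_le {A : Set E} {c : ℝ} (h : ∀ x ∈ span ℝ A, infDist x A ≤ c) : covRad A ≤ c :=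
  csSup_le ⟨_, 0, (span ℝ A).zero_mem, rfl⟩ <| by
    rintro _ ⟨x, hx, rfl⟩
    exact h x hx

lemma covRad_bot : covRad ((⊥ : Submodule ℤ E) : Set E) = 0 := by
  refine le_antisymm (covRad_le fun x hx => ?_) (covRad_nonneg _)
  rw [Submodule.bot_coe, span_zero_singleton, mem_bot] at hx
  simp [hx]

/-- Every point of `span ℝ G` lies within `∑ ‖b‖` of `G`: round its coefficients in a basis `b`
of `span ℝ G` taken inside `G`. -/
lemma Submodule.bddAbove_infDist_span [FiniteDimensional ℝ E] (G : Submodule ℤ E) :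
    BddAbove ((fun x => infDist x G) '' (span ℝ (G : Set E) : Set E)) := by
  obtain ⟨s, hsG, hspan, hli⟩ := exists_linearIndependent ℝ (G : Set E)
  lift s to Finset E using hli.setFinite
  refine ⟨∑ b ∈ s, ‖b‖, ?_⟩
  rintro _ ⟨x, hx, rfl⟩
  rw [SetLike.mem_coe, ← hspan, mem_span_finset] at hx
  obtain ⟨f, -, rfl⟩ := hx
  have hround : ∑ b ∈ s, ⌊f b⌋ • b ∈ G :=
    G.sum_mem fun b hb => G.smul_mem _ (hsG hb)
  calc infDist (∑ b ∈ s, f b • b) G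
      ≤ ‖∑ b ∈ s, f b • b - ∑ b ∈ s, ⌊f b⌋ • b‖ := by
        rw [← dist_eq_norm]
        exact infDist_le_dist_of_mem hround
    _ = ‖∑ b ∈ s, Int.fract (f b) • b‖ := by
        simp only [← Finset.sum_sub_distrib, Int.fract, sub_smul, Int.cast_smul_eq_zsmul]
    _ ≤ ∑ b ∈ s, ‖b‖ := by
        refine (norm_sum_le _ _).trans (Finset.sum_le_sum fun b _ => ?_)
        rw [norm_smul, Real.norm_of_nonneg (Int.fract_nonneg _)]
        exact mul_le_of_le_one_left (norm_nonneg b) (Int.fract_lt_one _).le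

end CovRad

section Projection

open Filter Topology

variable {n : ℕ}

local notation "𝔼" n:max => EuclideanSpace ℝ (Fin n)

lemma projPerp_eq_image (S A : Set (𝔼 n)) :
    projPerp S A = (span ℝ S)ᗮ.starProjection '' A :=
  rfl

lemma projPerp_eq_map (S : Set (𝔼 n)) (Q : Submodule ℤ (𝔼 n)) :
    projPerp S (Q : Set (𝔼 n))
      = Q.map ((span ℝ S)ᗮ.starProjection.toLinearMap.restrictScalars ℤ) :=
  rfl

lemma bddAbove_infDist_span_projPerp (S : Set (𝔼 n)) (Q : Submodule ℤ (𝔼 n)) :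
    BddAbove ((fun x => infDist x (projPerp S (Q : Set (𝔼 n)))) ''
      (span ℝ (projPerp S (Q : Set (𝔼 n))) : Set (𝔼 n))) := by
  rw [projPerp_eq_map]
  exact Submodule.bddAbove_infDist_span _

/-- Pythagoras: approximate `x` first modulo `Q` in the direction orthogonal to `span P`, then
approximate the remaining error, which lies in `span P`, by a point of `P`. -/
lemma infDist_sq_le_add_sq {P Q : Submodule ℤ (𝔼 n)} (hPQ : P ≤ Q)
    {B c : ℝ} (hP : ∀ u ∈ span ℝ (P : Set (𝔼 n)), infDist u P < B)
    (hQ : ∀ w ∈ span ℝ (projPerp (P : Set (𝔼 n)) (Q : Set (𝔼 n))),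
      infDist w (projPerp (P : Set (𝔼 n)) (Q : Set (𝔼 n))) < c)
    {x : 𝔼 n} (hx : x ∈ span ℝ (Q : Set (𝔼 n))) :
    infDist x Q ^ 2 ≤ B ^ 2 + c ^ 2 := by
  set K := span ℝ (P : Set (𝔼 n))
  rw [projPerp_eq_image] at hQ
  have hπx : Kᗮ.starProjection x ∈ span ℝ (Kᗮ.starProjection '' Q) :=
    image_span_subset_span _ _ ⟨x, hx, rfl⟩
  obtain ⟨_, ⟨y, hy, rfl⟩, hxy⟩ :=
    (infDist_lt_iff (Set.Nonempty.image _ ⟨0, Q.zero_mem⟩)).mp (hQ _ hπx)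
  obtain ⟨z, hz, hz'⟩ :=
    (infDist_lt_iff ⟨0, P.zero_mem⟩).mp (hP _ (K.starProjection_apply_mem (x - y)))
  have hzK : z ∈ K := subset_span hz
  have hK : K.starProjection (x - (y + z)) = K.starProjection (x - y) - z := by
    rw [← sub_sub, map_sub, starProjection_eq_self_iff.mpr hzK]
  have hKperp : Kᗮ.starProjection (x - (y + z)) = Kᗮ.starProjection x - Kᗮ.starProjection y := by
    rw [← sub_sub, map_sub, map_sub, starProjection_orthogonal_apply_eq_zero hzK, sub_zero]
  have hdist : infDist x Q ≤ ‖x - (y + z)‖ := by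
    rw [← dist_eq_norm]
    exact infDist_le_dist_of_mem (Q.add_mem hy (hPQ hz))
  rw [dist_eq_norm] at hxy hz'
  calc infDist x Q ^ 2 ≤ ‖x - (y + z)‖ ^ 2 := pow_le_pow_left₀ infDist_nonneg hdist 2
    _ = ‖K.starProjection (x - y) - z‖ ^ 2 + ‖Kᗮ.starProjection x - Kᗮ.starProjection y‖ ^ 2 := by
        rw [norm_sq_eq_add_norm_sq_starProjection _ K, hK, hKperp]
    _ ≤ B ^ 2 + c ^ 2 := by gcongr

lemma covRad_sq_le_add_covRad_projPerp_sq {P Q : Submodule ℤ (𝔼 n)} (hPQ : P ≤ Q) :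
    covRad (Q : Set (𝔼 n)) ^ 2
      ≤ covRad (P : Set (𝔼 n)) ^ 2 + covRad (projPerp (P : Set (𝔼 n)) (Q : Set (𝔼 n))) ^ 2 := by
  set B := covRad (P : Set (𝔼 n))
  set c := covRad (projPerp (P : Set (𝔼 n)) (Q : Set (𝔼 n)))
  have hlim : Tendsto (fun t : ℝ => (B + t) ^ 2 + (c + t) ^ 2) (𝓝[>] 0) (𝓝 (B ^ 2 + c ^ 2)) := by
    have : Continuous fun t : ℝ => (B + t) ^ 2 + (c + t) ^ 2 := by fun_prop
    simpa using (this.tendsto 0).mono_left nhdsWithin_le_nhds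
  have hx : ∀ x ∈ span ℝ (Q : Set (𝔼 n)), infDist x Q ≤ √(B ^ 2 + c ^ 2) := by
    intro x hx
    refine Real.le_sqrt_of_sq_le (ge_of_tendsto hlim (eventually_nhdsWithin_of_forall ?_))
    intro t (ht : 0 < t)
    refine infDist_sq_le_add_sq hPQ (fun u hu => ?_) (fun w hw => ?_) hx
    · exact (infDist_le_covRad (Submodule.bddAbove_infDist_span P) hu).trans_lt (by linarith)
    · exact (infDist_le_covRad (bddAbove_infDist_span_projPerp _ Q) hw).trans_lt (by linarith)
  exact (Real.le_sqrt (covRad_nonneg _) (by positivity)).mp (covRad_le hx)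

lemma covRad_le_sqrt_sum_covRad_quotLat_sq (Ls : ℕ → Submodule ℤ (𝔼 n)) (h0 : Ls 0 = ⊥) {k : ℕ}
    (hmono : ∀ i < k, Ls i ≤ Ls (i + 1)) :
    covRad (Ls k : Set (𝔼 n)) ≤ √(∑ i ∈ Finset.Icc 1 k, covRad (quotLat Ls i) ^ 2) := by
  refine Real.le_sqrt_of_sq_le ?_
  induction k with
  | zero => rw [h0, covRad_bot]; simp
  | succ k ih =>
    rw [Finset.sum_Icc_succ_top (Nat.le_add_left 1 k)]
    exact (covRad_sq_le_add_covRad_projPerp_sq (hmono k k.lt_succ_self)).trans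
      (add_le_add_left (ih fun i hi => hmono i (hi.trans k.lt_succ_self)) _)

end Projection

lemma sqrt_sum_sq_le_of_mul_le_succ {a : ℕ → ℝ} {γ : ℝ} (hγ : 1 < γ) (ha : ∀ i, 0 ≤ a i)
    {j : ℕ} (hgap : ∀ i, 1 ≤ i → i < j → γ * a i ≤ a (i + 1)) :
    √(∑ i ∈ Finset.Icc 1 j, a i ^ 2) ≤ a j / √(1 - 1 / γ ^ 2) := by
  have hr : 0 < 1 - 1 / γ ^ 2 := by
    have : 1 / γ ^ 2 < 1 := (div_lt_one (by positivity)).mpr (by nlinarith)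
    linarith
  rw [← Real.sqrt_sq (ha j), ← Real.sqrt_div' _ hr.le]
  refine Real.sqrt_le_sqrt ?_
  induction j with
  | zero =>
    rw [Finset.Icc_eq_empty (by norm_num), Finset.sum_empty]
    positivity
  | succ j ih =>
    rw [Finset.sum_Icc_succ_top (Nat.le_add_left 1 j)]
    rcases Nat.eq_zero_or_pos j with rfl | hj
    · rw [Finset.Icc_eq_empty (by norm_num), Finset.sum_empty, zero_add]
      exact le_div_self (sq_nonneg _) hr (by linarith [show 0 < 1 / γ ^ 2 by positivity])
    have hstep : γ ^ 2 * a j ^ 2 ≤ a (j + 1) ^ 2 := by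
      rw [← mul_pow]
      exact pow_le_pow_left₀ (mul_nonneg (by linarith) (ha j)) (hgap j hj j.lt_succ_self) 2
    have ih := ih fun i hi hij => hgap i hi (hij.trans j.lt_succ_self)
    have hγ2 : 0 < γ ^ 2 - 1 := by nlinarith
    have hdiv : ∀ x : ℝ, x / (1 - 1 / γ ^ 2) = γ ^ 2 * x / (γ ^ 2 - 1) := fun x => by
      field_simp
    rw [hdiv] at ih ⊢
    calc ∑ i ∈ Finset.Icc 1 j, a i ^ 2 + a (j + 1) ^ 2
        ≤ γ ^ 2 * a j ^ 2 / (γ ^ 2 - 1) + a (j + 1) ^ 2 := by gcongr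
      _ ≤ a (j + 1) ^ 2 / (γ ^ 2 - 1) + a (j + 1) ^ 2 := by gcongr
      _ = γ ^ 2 * a (j + 1) ^ 2 / (γ ^ 2 - 1) := by field_simp; ring

lemma half_le_sqrt_one_sub_inv_sq {γ : ℝ} (hγ : 2 ≤ γ) : 1 / 2 ≤ √(1 - 1 / γ ^ 2) := by
  rw [Real.le_sqrt' (by norm_num)]
  have : 1 / γ ^ 2 ≤ 1 / 4 := one_div_le_one_div_of_le (by norm_num) (by nlinarith)
  linarith

theorem covRad_prefix_le_of_filtration_general
    (n : ℕ) (L : Submodule ℤ (EuclideanSpace ℝ (Fin n)))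
    (m : ℕ) (Ls : ℕ → Submodule ℤ (EuclideanSpace ℝ (Fin n))) (q γ : ℝ) (hq : 1 ≤ q) (hγ : 1 < γ)
    (hfil : IsQGFiltration L m Ls q γ) (j : ℕ) (hjm : j ≤ m) :
    covRad (Ls j : Set (EuclideanSpace ℝ (Fin n)))
        ≤ q / Real.sqrt (1 - 1 / γ ^ 2) * lambda1 (quotLat Ls j) / 2 ∧
      (2 ≤ γ → covRad (Ls j : Set (EuclideanSpace ℝ (Fin n))) ≤ q * lambda1 (quotLat Ls j)) := by
  obtain ⟨⟨h0, -, hlt, -⟩, hcov, hgap⟩ := hfil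
  set a : ℕ → ℝ := fun i => q * lambda1 (quotLat Ls i) / 2
  have ha : ∀ i, 0 ≤ a i := fun i => by
    have := lambda1_nonneg (quotLat Ls i)
    positivity
  have hfirst : covRad (Ls j : Set (EuclideanSpace ℝ (Fin n))) ≤ a j / √(1 - 1 / γ ^ 2) :=
    calc covRad (Ls j : Set (EuclideanSpace ℝ (Fin n)))
        ≤ √(∑ i ∈ Finset.Icc 1 j, covRad (quotLat Ls i) ^ 2) :=
          covRad_le_sqrt_sum_covRad_quotLat_sq Ls h0 fun i hi => (hlt i (by omega)).le
      _ ≤ √(∑ i ∈ Finset.Icc 1 j, a i ^ 2) := by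
          gcongr with i hi
          · exact covRad_nonneg _
          · rw [Finset.mem_Icc] at hi
            exact hcov i hi.1 (by omega)
      _ ≤ a j / √(1 - 1 / γ ^ 2) :=
          sqrt_sum_sq_le_of_mul_le_succ hγ ha fun i hi hij => by
            have := hgap i hi (by omega)
            simp only [a]
            nlinarith
  refine ⟨hfirst.trans_eq (by ring), fun h2γ => hfirst.trans ?_⟩
  calc a j / √(1 - 1 / γ ^ 2) ≤ a j / (1 / 2) :=
        div_le_div_of_nonneg_left (ha j) (by norm_num) (half_le_sqrt_one_sub_inv_sq h2γ)
    _ = q * lambda1 (quotLat Ls j) := by ring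

/-- For a `(q, γ)`-filtration of `L` and `1 ≤ j ≤ m`:
`μ(L_j) ≤ (q/√(1 − 1/γ²))·λ₁(L_j/L_{j−1})/2`; consequently, if `γ ≥ 2` then
`μ(L_j) ≤ q·λ₁(L_j/L_{j−1})`. -/
theorem covRad_prefix_le_of_filtration
    (n : ℕ) (L : Submodule ℤ (EuclideanSpace ℝ (Fin n))) [DiscreteTopology L] (hL : IsZLattice ℝ L)
    (m : ℕ) (Ls : ℕ → Submodule ℤ (EuclideanSpace ℝ (Fin n))) (q γ : ℝ) (hq : 1 ≤ q) (hγ : 1 < γ)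
    (hfil : IsQGFiltration L m Ls q γ) (j : ℕ) (hj1 : 1 ≤ j) (hjm : j ≤ m) :
    covRad (Ls j : Set (EuclideanSpace ℝ (Fin n)))
        ≤ q / Real.sqrt (1 - 1 / γ ^ 2) * lambda1 (quotLat Ls j) / 2 ∧
      (2 ≤ γ → covRad (Ls j : Set (EuclideanSpace ℝ (Fin n))) ≤ q * lambda1 (quotLat Ls j)) :=
  covRad_prefix_le_of_filtration_general n L m Ls q γ hq hγ hfil j hjm
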